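/- Let q be an odd square prime power and n = (√q+1)/2. The Fermat curve U^n + V^n + W^n = 0 over F_q is the image of the Hermitian curve u^{√q+1} + v^{√q+1} + w^{√q+1} = 0 under the morphism (u,v,w) ↦ (u^2, v^2, w^2); in particular every F_q-rational point of the Fermat curve having all coordinates that are squares times a point of the Hermitian curve arises this way, and the Fermat curve of degree n is maximal over F_q. -/

import Mathlib

/-!
Since `2n = √q + 1`, the substitution `(u, v, w) ↦ (u², v², w²)` turns the Hermitian equation into
the Fermat one. For the count, write `s = √q`. The map `x ↦ xⁿ` sends `F_q` onto `{0} ∪ μ`, where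
`μ` is the group of `2(s - 1)`-th roots of unity, with fibres of size `n` over `μ`. An element of
`μ` satisfies `x^s = ±x`, and applying the Frobenius `x ↦ x^s` to `a + b + 1 = 0` forces both signs
to be `+` when `a, b ∈ μ`; so the pairs `(a, -1 - a)` in `μ²` correspond to the `s - 2` elements
of `F_s^× ∖ {-1}`. This gives `2n + n²(s - 2)` affine points and `n` points at infinity, and the
nonzero solutions in `F_q³` are `q - 1` times the projective ones.
-/

open Finset Polynomial

theorem IsCyclic.exists_pow_eq_of_pow_eq_one {G : Type*} [CommGroup G] [IsCyclic G] [Finite G]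
    {d e : ℕ} (hd : d ≠ 0) (hde : d * e = Nat.card G) {a : G} (ha : a ^ e = 1) :
    ∃ x, x ^ d = a := by
  have hle : (powMonoidHom d : G →* G).range ≤ (powMonoidHom e).ker := by
    rintro _ ⟨x, rfl⟩
    simp [← pow_mul, hde, pow_card_eq_one']
  have hcard : Nat.card (powMonoidHom e : G →* G).ker ≤
      Nat.card (powMonoidHom d : G →* G).range := by
    rw [IsCyclic.card_powMonoidHom_ker, IsCyclic.card_powMonoidHom_range, ← hde,
      Nat.gcd_eq_right (dvd_mul_left e d), Nat.gcd_eq_right (dvd_mul_right d e),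
      Nat.mul_div_cancel_left _ (Nat.pos_of_ne_zero hd)]
  have ha' : a ∈ (powMonoidHom d : G →* G).range := by
    rw [Subgroup.eq_of_le_of_card_ge hle hcard]
    exact ha
  exact ha'

theorem pow_sub_one_eq_iff {M : Type*} [MonoidWithZero M] [IsRightCancelMulZero M] {x c : M}
    {n : ℕ} (hx : x ≠ 0) (hn : n ≠ 0) : x ^ (n - 1) = c ↔ x ^ n = c * x := by
  rw [← pow_sub_one_mul hn, mul_left_inj' hx]

section Domain

variable {R : Type*} [CommRing R] [IsDomain R]

theorem pow_sub_one_eq_one_iff {s : ℕ} (hs : 1 < s) {x : R} :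
    x ^ (s - 1) = 1 ↔ x ≠ 0 ∧ x ^ s = x := by
  refine ⟨fun h => ?_, fun ⟨hx, h⟩ => ?_⟩
  · have hx : x ≠ 0 := ne_zero_pow (by omega : s - 1 ≠ 0) (by simp [h])
    exact ⟨hx, by simpa [pow_sub_one_eq_iff hx (by omega : s ≠ 0)] using h⟩
  · simpa [pow_sub_one_eq_iff hx (by omega : s ≠ 0)] using h

theorem pow_two_mul_sub_one_eq_one_iff {s : ℕ} (hs : 1 < s) {x : R} :
    x ^ (2 * (s - 1)) = 1 ↔ x ≠ 0 ∧ (x ^ s = x ∨ x ^ s = -x) := by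
  rw [pow_mul', sq_eq_one_iff]
  refine ⟨fun h => ?_, fun ⟨hx, h⟩ => ?_⟩
  · have hx : x ≠ 0 := ne_zero_pow (by omega : s - 1 ≠ 0) (by rcases h with h | h <;> simp [h])
    exact ⟨hx, by simpa only [pow_sub_one_eq_iff hx (by omega : s ≠ 0), one_mul, neg_one_mul]
      using h⟩
  · simpa only [pow_sub_one_eq_iff hx (by omega : s ≠ 0), one_mul, neg_one_mul] using h

end Domain

theorem mul_two_mul_sub_one_eq_sq_sub_one {n s : ℕ} (hn : 2 * n = s + 1) :
    n * (2 * (s - 1)) = s ^ 2 - 1 := by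
  rw [← mul_assoc, mul_comm n 2, hn, ← Nat.sq_sub_sq, one_pow]

theorem Finset.card_filter_add_eq_sum {α R : Type*} [Fintype α] [AddCommGroup R] [Fintype R]
    [DecidableEq R] (f : α → R) (c : R) :
    #{p : α × α | f p.1 + f p.2 = c} = ∑ a, #{x | f x = a} * #{y | f y = c - a} := by
  rw [card_eq_sum_card_fiberwise (f := fun p => f p.1) (t := univ) (by simp)]
  refine sum_congr rfl fun a _ => ?_
  rw [← card_product, filter_filter]
  congr 1
  ext ⟨x, y⟩
  simp only [mem_filter, mem_univ, true_and, mem_product]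
  constructor
  · rintro ⟨h, rfl⟩
    exact ⟨rfl, eq_sub_of_add_eq' h⟩
  · rintro ⟨rfl, h⟩
    exact ⟨by rw [h]; abel, rfl⟩

namespace FiniteField

variable {F : Type*} [Field F] [Fintype F]

theorem one_lt_of_card_eq_sq {s : ℕ} (hcard : Fintype.card F = s ^ 2) : 1 < s :=
  (one_lt_pow_iff two_ne_zero).mp (hcard ▸ Fintype.one_lt_card)

theorem exists_isPrimitiveRoot_of_dvd {d : ℕ} (hd : d ≠ 0) (hdvd : d ∣ Fintype.card F - 1) :
    ∃ ζ : F, IsPrimitiveRoot ζ d := by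
  have : NeZero d := ⟨hd⟩
  refine card_rootsOfUnity_eq_iff_exists_isPrimitiveRoot.mp ?_
  rw [rootsOfUnity_eq_ker, IsCyclic.card_powMonoidHom_ker, Nat.card_units,
    Nat.card_eq_fintype_card]
  exact Nat.gcd_eq_right hdvd

variable [DecidableEq F]

theorem card_pow_eq_of_ne_zero {d e : ℕ} (hd : d ≠ 0) (hde : d * e = Fintype.card F - 1)
    {a : F} (ha : a ≠ 0) : #{x | x ^ d = a} = if a ^ e = 1 then d else 0 := by
  obtain ⟨ζ, hζ⟩ := exists_isPrimitiveRoot_of_dvd hd (Dvd.intro e hde)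
  have hroots : #{x | x ^ d = a} = Multiset.card (nthRoots d a) := by
    rw [← Multiset.toFinset_card_of_nodup (hζ.nthRoots_nodup ha)]
    congr 1
    ext x
    simp [mem_nthRoots (Nat.pos_of_ne_zero hd)]
  have hsolvable : (∃ x, x ^ d = a) ↔ a ^ e = 1 := by
    constructor
    · rintro ⟨x, rfl⟩
      have hx : x ≠ 0 := by rintro rfl; exact ha (zero_pow hd)
      rw [← pow_mul, hde, pow_card_sub_one_eq_one x hx]
    · intro hae
      obtain ⟨x, hx⟩ := IsCyclic.exists_pow_eq_of_pow_eq_one hd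
        (by rwa [Nat.card_units, Nat.card_eq_fintype_card]) (a := Units.mk0 a ha)
        (Units.ext (by simpa using hae))
      exact ⟨x, by simpa using congrArg Units.val hx⟩
  rw [hroots, hζ.card_nthRoots]
  simp only [hsolvable]

theorem card_pow_eq {d e : ℕ} (hd : d ≠ 0) (hde : d * e = Fintype.card F - 1) (a : F) :
    #{x | x ^ d = a} = (if a = 0 then 1 else 0) + if a ^ e = 1 then d else 0 := by
  have he : e ≠ 0 := by
    rintro rfl
    have := Fintype.one_lt_card (α := F)
    omega
  rcases eq_or_ne a 0 with rfl | ha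
  · simp [hd, zero_pow he, filter_eq']
  · simp [card_pow_eq_of_ne_zero hd hde ha, ha]

theorem card_pow_add_one_eq_zero {d e : ℕ} (hd : d ≠ 0) (hde : d * e = Fintype.card F - 1)
    (he : Even e) : #{t : F | t ^ d + 1 = 0} = d := by
  rw [filter_congr fun t _ => add_eq_zero_iff_eq_neg, card_pow_eq hd hde]
  simp [he.neg_one_pow]

end FiniteField

theorem card_fermat_cone_affine_chart (F : Type*) [Field F] [Fintype F] [DecidableEq F] (n : ℕ) :
    #{x : F × F × F | (x ≠ 0 ∧ x.1 ^ n + x.2.1 ^ n + x.2.2 ^ n = 0) ∧ x.2.2 ≠ 0} =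
      #{c : F | c ≠ 0} * #{x : F × F | x.1 ^ n + x.2 ^ n + 1 = 0} := by
  rw [← card_product]
  apply card_nbij' (fun x => (x.2.2, x.1 / x.2.2, x.2.1 / x.2.2))
    (fun c => (c.1 * c.2.1, c.1 * c.2.2, c.1))
  · rintro ⟨a, b, c⟩ h
    simp only [mem_coe, mem_filter, mem_univ, true_and, mem_product] at h ⊢
    refine ⟨h.2, ?_⟩
    rw [div_pow, div_pow, ← add_div, div_add_one (pow_ne_zero n h.2), h.1.2, zero_div]
  · rintro ⟨c, a, b⟩ h
    simp only [mem_coe, mem_filter, mem_univ, true_and, mem_product] at h ⊢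
    refine ⟨⟨fun h0 => h.1 (congrArg (fun x : F × F × F => x.2.2) h0), ?_⟩, h.1⟩
    linear_combination c ^ n * h.2
  · rintro ⟨a, b, c⟩ h
    simp only [mem_coe, mem_filter, mem_univ, true_and] at h
    simp [mul_div_cancel₀ _ h.2]
  · rintro ⟨c, a, b⟩ h
    simp only [mem_coe, mem_filter, mem_univ, true_and, mem_product] at h
    simp [mul_div_cancel_left₀ _ h.1]

theorem card_fermat_cone_at_infinity (F : Type*) [Field F] [Fintype F] [DecidableEq F] {n : ℕ}
    (hn : n ≠ 0) :
    #{x : F × F × F | (x ≠ 0 ∧ x.1 ^ n + x.2.1 ^ n + x.2.2 ^ n = 0) ∧ ¬x.2.2 ≠ 0} =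
      #{c : F | c ≠ 0} * #{t : F | t ^ n + 1 = 0} := by
  have hy : ∀ x : F × F × F,
      (x ≠ 0 ∧ x.1 ^ n + x.2.1 ^ n + x.2.2 ^ n = 0) ∧ ¬x.2.2 ≠ 0 → x.2.1 ≠ 0 := by
    rintro ⟨a, b, c⟩ ⟨⟨hx, h⟩, hc⟩ rfl
    obtain rfl : c = 0 := not_not.mp hc
    obtain rfl : a = 0 := (pow_eq_zero_iff hn).mp (by simpa [zero_pow hn] using h)
    exact hx rfl
  rw [← card_product]
  apply card_nbij' (fun x => (x.2.1, x.1 / x.2.1)) (fun c => (c.1 * c.2, c.1, 0))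
  · rintro ⟨a, b, c⟩ h
    simp only [mem_coe, mem_filter, mem_univ, true_and, mem_product] at h ⊢
    have hb := hy _ h
    obtain ⟨⟨-, h⟩, hc⟩ := h
    obtain rfl := not_not.mp hc
    refine ⟨hb, ?_⟩
    rw [div_pow, div_add_one (pow_ne_zero n hb), div_eq_zero_iff]
    exact Or.inl (by simpa [zero_pow hn] using h)
  · rintro ⟨c, t⟩ h
    simp only [mem_coe, mem_filter, mem_univ, true_and, mem_product] at h ⊢
    refine ⟨⟨fun h0 => h.1 (congrArg (fun x : F × F × F => x.2.1) h0), ?_⟩,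
      not_not.mpr rfl⟩
    rw [zero_pow hn]
    linear_combination c ^ n * h.2
  · rintro ⟨a, b, c⟩ h
    simp only [mem_coe, mem_filter, mem_univ, true_and] at h
    simp [mul_div_cancel₀ _ (hy _ h), not_not.mp h.2]
  · rintro ⟨c, t⟩ h
    simp only [mem_coe, mem_filter, mem_univ, true_and, mem_product] at h
    simp [mul_div_cancel_left₀ _ h.1]

theorem card_fermat_cone (F : Type*) [Field F] [Fintype F] [DecidableEq F] {n : ℕ}
    (hn : n ≠ 0) :
    Nat.card {x : F × F × F // x ≠ 0 ∧ x.1 ^ n + x.2.1 ^ n + x.2.2 ^ n = 0} =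
      (Fintype.card F - 1) *
        (#{x : F × F | x.1 ^ n + x.2 ^ n + 1 = 0} + #{t : F | t ^ n + 1 = 0}) := by
  rw [Nat.card_eq_fintype_card, Fintype.card_subtype,
    ← card_filter_add_card_filter_not (p := fun x : F × F × F => x.2.2 ≠ 0), filter_filter,
    filter_filter, card_fermat_cone_affine_chart, card_fermat_cone_at_infinity F hn, ← mul_add,
    filter_ne', card_erase_of_mem (mem_univ 0), card_univ]

section Frobenius

variable {F : Type*} [Field F] {p : ℕ} [Fact p.Prime] [CharP F p]

theorem pow_char_pow_eq_self_of_add_add_one_eq_zero (h2 : (2 : F) ≠ 0) {k : ℕ} {a b : F}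
    (ha : a ≠ 0) (ha' : a ^ p ^ k = a ∨ a ^ p ^ k = -a) (hb' : b ^ p ^ k = b ∨ b ^ p ^ k = -b)
    (hab : a + b + 1 = 0) : a ^ p ^ k = a := by
  have hfrob : a ^ p ^ k + b ^ p ^ k + 1 = 0 := by
    rw [← one_pow (p ^ k), ← add_pow_char_pow, ← add_pow_char_pow, hab,
      zero_pow (pow_ne_zero _ (Fact.out : p.Prime).ne_zero)]
  rcases ha' with ha' | ha'
  · exact ha'
  rcases hb' with hb' | hb' <;> rw [ha', hb'] at hfrob
  · exact absurd (by linear_combination hab - hfrob : 2 * a = 0) (mul_ne_zero h2 ha)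
  · exact absurd (by linear_combination hab + hfrob : (2 : F) = 0) h2

variable [Fintype F] [DecidableEq F]

theorem card_pow_eq_one_and_neg_one_sub_pow_eq_one (hp : p ≠ 2) {k : ℕ}
    (hcard : Fintype.card F = (p ^ k) ^ 2) :
    #{a : F | a ^ (2 * (p ^ k - 1)) = 1 ∧ (-1 - a) ^ (2 * (p ^ k - 1)) = 1} = p ^ k - 2 := by
  set s := p ^ k
  have hs := FiniteField.one_lt_of_card_eq_sq hcard
  have hs1 : s - 1 ≠ 0 := by omega
  have h2 : (2 : F) ≠ 0 := Ring.two_ne_zero (by rwa [ringChar.eq F p])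
  have hodd : Odd s := ((Fact.out : p.Prime).odd_of_ne_two hp).pow
  have hset : ({a | a ^ (2 * (s - 1)) = 1 ∧ (-1 - a) ^ (2 * (s - 1)) = 1} : Finset F) =
      ({a | a ^ (s - 1) = 1} : Finset F).erase (-1) := by
    ext a
    simp only [mem_erase, mem_filter, mem_univ, true_and, pow_two_mul_sub_one_eq_one_iff hs,
      pow_sub_one_eq_one_iff hs]
    constructor
    · rintro ⟨⟨ha, ha'⟩, hb, hb'⟩
      exact ⟨fun h => hb (by rw [h]; ring), ha,
        pow_char_pow_eq_self_of_add_add_one_eq_zero h2 ha ha' hb' (by ring)⟩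
    · rintro ⟨hne, ha, has⟩
      have hb : -1 - a ≠ 0 := fun h => hne (by linear_combination -h)
      have hbs : (-1 - a) ^ s = -1 - a := by rw [sub_pow_char_pow, hodd.neg_one_pow, has]
      exact ⟨⟨ha, Or.inl has⟩, hb, Or.inl hbs⟩
  have hcard' : (s - 1) * (s + 1) = Fintype.card F - 1 := by
    rw [hcard, mul_comm, ← Nat.sq_sub_sq, one_pow]
  rw [hset, card_erase_of_mem, FiniteField.card_pow_eq_of_ne_zero hs1 hcard' one_ne_zero]
  · simp only [one_pow, if_true]
    omega
  · simp [(Nat.Odd.sub_odd hodd odd_one).neg_one_pow]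

theorem card_fermat_affine (hp : p ≠ 2) {k n : ℕ} (hcard : Fintype.card F = (p ^ k) ^ 2)
    (hn : 2 * n = p ^ k + 1) :
    #{x : F × F | x.1 ^ n + x.2 ^ n + 1 = 0} = 2 * n + n ^ 2 * (p ^ k - 2) := by
  set s := p ^ k
  have hn0 : n ≠ 0 := by omega
  have hde : n * (2 * (s - 1)) = Fintype.card F - 1 := by
    rw [hcard, mul_two_mul_sub_one_eq_sq_sub_one hn]
  have he : 2 * (s - 1) ≠ 0 := by
    have := FiniteField.one_lt_of_card_eq_sq hcard
    omega
  have heven : (-1 : F) ^ (2 * (s - 1)) = 1 := by simp [pow_mul]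
  have hr := FiniteField.card_pow_eq hn0 hde
  have hterm : ∀ a : F, #{x | x ^ n = a} * #{y | y ^ n = -1 - a} =
      (if a = 0 then n else 0) + (if a = -1 then n else 0) +
        if a ^ (2 * (s - 1)) = 1 ∧ (-1 - a) ^ (2 * (s - 1)) = 1 then n ^ 2 else 0 := by
    intro a
    rw [hr, hr]
    rcases eq_or_ne a 0 with rfl | ha0
    · simp [heven, zero_pow he]
    rcases eq_or_ne a (-1) with rfl | ha1
    · simp [heven, zero_pow he]
    have hb : -1 - a ≠ 0 := fun h => ha1 (by linear_combination -h)
    simp only [ha0, ha1, hb, if_false, zero_add, ite_and]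
    split_ifs <;> ring
  rw [filter_congr fun x _ => add_eq_zero_iff_eq_neg,
    card_filter_add_eq_sum (fun x : F => x ^ n), sum_congr rfl fun a _ => hterm a,
    sum_add_distrib, sum_add_distrib, sum_ite_eq', sum_ite_eq', ← sum_filter, sum_const,
    smul_eq_mul, card_pow_eq_one_and_neg_one_sub_pow_eq_one hp hcard]
  simp only [mem_univ, if_true]
  ring

theorem card_fermat_projective (hp : p ≠ 2) {k n : ℕ}
    (hcard : Fintype.card F = (p ^ k) ^ 2) (hn : 2 * n = p ^ k + 1) :
    #{x : F × F | x.1 ^ n + x.2 ^ n + 1 = 0} + #{t : F | t ^ n + 1 = 0} =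
      (p ^ k) ^ 2 + 1 + 2 * ((n - 1) * (n - 2) / 2) * p ^ k := by
  have hde : n * (2 * (p ^ k - 1)) = Fintype.card F - 1 := by
    rw [hcard, mul_two_mul_sub_one_eq_sq_sub_one hn]
  rw [card_fermat_affine hp hcard hn,
    FiniteField.card_pow_add_one_eq_zero (by omega) hde (even_two_mul _)]
  have hs := FiniteField.one_lt_of_card_eq_sq hcard
  obtain ⟨m, rfl⟩ : ∃ m, n = m + 2 := ⟨n - 2, by omega⟩
  obtain ⟨c, hc⟩ := Nat.even_mul_succ_self m
  rw [show p ^ k = 2 * m + 3 by omega, show m + 2 - 1 = m + 1 by omega,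
    show 2 * m + 3 - 2 = 2 * m + 1 by omega, Nat.add_sub_cancel, mul_comm (m + 1), hc,
    ← two_mul, Nat.mul_div_cancel_left _ two_pos]
  linear_combination (2 * m + 3) * hc

end Frobenius

/-- the Fermat curve of degree n = (√q+1)/2 is the image of the
Hermitian curve under squaring of coordinates, and it is F_q-maximal: its
number of projective rational points equals q + 1 + 2gs with
g = (n-1)(n-2)/2 (counted via nonzero affine representatives). -/
theorem stmt8 (F : Type*) [Field F] [Fintype F]
    (p k : ℕ) (hp : p.Prime) (hpodd : Odd p)
    (s : ℕ) (hs : s = p ^ k) (q : ℕ) (hq : q = s ^ 2)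
    (hcard : Fintype.card F = q)
    (n : ℕ) (hn : 2 * n = s + 1) :
    (∀ u v w : F, u ^ (s + 1) + v ^ (s + 1) + w ^ (s + 1) = 0 →
      (u ^ 2) ^ n + (v ^ 2) ^ n + (w ^ 2) ^ n = 0) ∧
    Nat.card {x : F × F × F //
        x ≠ 0 ∧ x.1 ^ n + x.2.1 ^ n + x.2.2 ^ n = 0} =
      (q - 1) * (q + 1 + 2 * ((n - 1) * (n - 2) / 2) * s) := by
  refine ⟨fun u v w h => by simpa only [← pow_mul, hn] using h, ?_⟩
  classical
  subst hs hq
  have : Fact p.Prime := ⟨hp⟩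
  have : CharP F p := charP_of_card_eq_prime_pow (f := k * 2) (by rw [hcard, pow_mul])
  have hp2 : p ≠ 2 := by rintro rfl; exact absurd hpodd (by decide)
  rw [card_fermat_cone F (by omega), hcard, card_fermat_projective hp2 hcard hn]
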